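/- arXiv:2305.08012 — 2 statements merged into one kernel-verified Lean document; each statement's English description precedes it below -/
import Mathlib

section
/- For the reset-to-mod LIF map with threshold θ > 0 and leak α ≥ 0 applied to any finite spike train η, the quantization error satisfies ‖LIF_{θ,α}(η) − η‖_{A,α} < θ, where LIF_{θ,α}(η) is the output spike train with amplitudes b_k = θ·q(v_k/θ) from the reset-to-mod recursion. -/
/-!
The error of the output train satisfies the same leaky recursion as the membrane potential:
`b k - a k = e^{-α(t_k - t_{k-1})} u_{k-1} - u_k`, so its leaky partial sums telescope to
`-u_n`. Since `u_n = v_n - θ q(v_n/θ)` is a remainder of truncation to a multiple of `θ`,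
`|u_n| < θ` for every `n`.
-/

/-- Truncation-toward-zero quantization `q x = sgn(x)·⌊|x|⌋`. -/
noncomputable def q (x : ℝ) : ℤ := if 0 ≤ x then ⌊x⌋ else -⌊-x⌋

open Finset Real

lemma abs_sub_q_lt_one (x : ℝ) : |x - q x| < 1 := by
  unfold q
  split_ifs
  · rw [abs_of_nonneg (by linarith [Int.floor_le x])]
    linarith [Int.lt_floor_add_one x]
  · push_cast
    rw [abs_of_nonpos (by linarith [Int.floor_le (-x)])]
    linarith [Int.lt_floor_add_one (-x)]

lemma abs_sub_mul_q_div_lt {θ : ℝ} (hθ : 0 < θ) (v : ℝ) : |v - θ * q (v / θ)| < θ := by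
  have hrem : v - θ * q (v / θ) = θ * (v / θ - q (v / θ)) := by field_simp
  rw [hrem, abs_mul, abs_of_pos hθ]
  simpa using mul_lt_mul_of_pos_left (abs_sub_q_lt_one (v / θ)) hθ

lemma sum_Icc_mul_exp_succ (α : ℝ) (t c : ℕ → ℝ) (n : ℕ) :
    ∑ j ∈ Icc 1 (n + 1), c j * exp (-α * (t (n + 1) - t j))
      = exp (-α * (t (n + 1) - t n)) * ∑ j ∈ Icc 1 n, c j * exp (-α * (t n - t j))
        + c (n + 1) := by
  rw [sum_Icc_succ_top (by omega), mul_sum, sub_self, mul_zero, exp_zero, mul_one]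
  congr 1
  refine sum_congr rfl fun j _ => ?_
  rw [mul_left_comm, ← exp_add]
  ring_nf

lemma sum_Icc_mul_exp_eq_of_leaky_rec (α : ℝ) (t a b u : ℕ → ℝ)
    (hrec : ∀ k, u (k + 1) = exp (-α * (t (k + 1) - t k)) * u k + a (k + 1) - b (k + 1))
    (n : ℕ) :
    ∑ j ∈ Icc 1 n, (b j - a j) * exp (-α * (t n - t j))
      = exp (-α * (t n - t 0)) * u 0 - u n := by
  induction n with
  | zero => simp
  | succ n ih =>
    have hexp : exp (-α * (t (n + 1) - t n)) * exp (-α * (t n - t 0))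
        = exp (-α * (t (n + 1) - t 0)) := by
      rw [← exp_add]; ring_nf
    rw [sum_Icc_mul_exp_succ, ih, hrec n, ← hexp]
    ring

theorem reset_to_mod_LIF_quantization_general
    (N : ℕ) (hN : 1 ≤ N) (θ α : ℝ) (hθ : 0 < θ) (t a u v b : ℕ → ℝ)
    (h0 : u 0 = 0)
    (hv : ∀ k, v (k + 1) = Real.exp (-α * (t (k + 1) - t k)) * u k + a (k + 1))
    (hb : ∀ k, b (k + 1) = θ * (q (v (k + 1) / θ) : ℝ))
    (hu : ∀ k, u (k + 1) = v (k + 1) - b (k + 1)) :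
    (Finset.Icc 1 N).sup' (Finset.nonempty_Icc.mpr hN)
        (fun n => |∑ j ∈ Finset.Icc 1 n, (b j - a j) * Real.exp (-α * (t n - t j))|)
      < θ := by
  have hrec : ∀ k, u (k + 1) = exp (-α * (t (k + 1) - t k)) * u k + a (k + 1) - b (k + 1) :=
    fun k => by rw [hu, hv]
  rw [sup'_lt_iff]
  rintro n hn
  obtain ⟨k, rfl⟩ : ∃ k, n = k + 1 := Nat.exists_eq_add_one.mpr (mem_Icc.mp hn).1
  rw [sum_Icc_mul_exp_eq_of_leaky_rec α t a b u hrec, h0, mul_zero, zero_sub, abs_neg, hu, hb]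
  exact abs_sub_mul_q_div_lt hθ _

/-- Reset-to-mod LIF is a θ-quantization of the input spike train in the leaky
Alexiewicz norm: `‖LIF_{θ,α}(η) − η‖_{A,α} < θ`. -/
theorem reset_to_mod_LIF_quantization
    (N : ℕ) (hN : 1 ≤ N) (θ α : ℝ) (hθ : 0 < θ) (hα : 0 ≤ α) (t a u v b : ℕ → ℝ)
    (ht : ∀ i j, 1 ≤ i → i ≤ j → j ≤ N → t i ≤ t j)
    (h0 : u 0 = 0)
    (hv : ∀ k, v (k + 1) = Real.exp (-α * (t (k + 1) - t k)) * u k + a (k + 1))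
    (hb : ∀ k, b (k + 1) = θ * (q (v (k + 1) / θ) : ℝ))
    (hu : ∀ k, u (k + 1) = v (k + 1) - b (k + 1)) :
    (Finset.Icc 1 N).sup' (Finset.nonempty_Icc.mpr hN)
        (fun n => |∑ j ∈ Finset.Icc 1 n, (b j - a j) * Real.exp (-α * (t n - t j))|)
      < θ :=
  reset_to_mod_LIF_quantization_general N hN θ α hθ t a u v b h0 hv hb hu
end

section
/- When all input amplitudes satisfy |a_k| < θ, the reset-to-mod and reset-by-subtraction LIF recursions produce identical output spike trains. -/
lemma q_neg (x : ℝ) : q (-x) = -q x := by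
  rcases lt_trichotomy x 0 with hx | rfl | hx
  · rw [q, q, if_pos (by linarith), if_neg hx.not_ge, neg_neg]
  · simp [q]
  · rw [q, q, if_neg (by linarith), if_pos hx.le, neg_neg]

lemma q_of_nonneg_of_lt_two {x : ℝ} (h0 : 0 ≤ x) (h2 : x < 2) :
    q x = if 1 ≤ x then 1 else 0 := by
  rw [q, if_pos h0]
  split_ifs with h1 <;> rw [Int.floor_eq_iff] <;> push_cast <;> constructor <;> linarith

/-- The spike emitted by reset-by-subtraction at potential `v`. -/
noncomputable def thresholdSpike (θ v : ℝ) : ℝ := if θ ≤ |v| then θ * Real.sign v else 0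

lemma thresholdSpike_neg (θ v : ℝ) : thresholdSpike θ (-v) = -thresholdSpike θ v := by
  simp only [thresholdSpike, abs_neg, Real.sign_neg]
  split_ifs <;> ring

lemma mul_q_div_eq_thresholdSpike_of_nonneg {θ v : ℝ} (hθ : 0 < θ) (h0 : 0 ≤ v)
    (h2 : v < 2 * θ) : θ * q (v / θ) = thresholdSpike θ v := by
  have h0' : 0 ≤ v / θ := div_nonneg h0 hθ.le
  have h2' : v / θ < 2 := (div_lt_iff₀ hθ).2 h2
  rw [q_of_nonneg_of_lt_two h0' h2', thresholdSpike, abs_of_nonneg h0]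
  simp only [one_le_div hθ]
  split_ifs with h1
  · rw [Real.sign_of_pos (hθ.trans_le h1)]; push_cast; ring
  · simp

lemma mul_q_div_eq_thresholdSpike {θ v : ℝ} (hθ : 0 < θ) (hv : |v| < 2 * θ) :
    θ * q (v / θ) = thresholdSpike θ v := by
  rcases le_or_gt 0 v with h0 | h0
  · exact mul_q_div_eq_thresholdSpike_of_nonneg hθ h0 ((le_abs_self v).trans_lt hv)
  · have key := mul_q_div_eq_thresholdSpike_of_nonneg hθ (neg_nonneg.2 h0.le)
      ((neg_le_abs v).trans_lt hv)
    rw [neg_div, q_neg, thresholdSpike_neg] at key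
    push_cast at key
    linarith

lemma abs_sub_thresholdSpike_lt {θ v : ℝ} (hv : |v| < 2 * θ) :
    |v - thresholdSpike θ v| < θ := by
  rw [thresholdSpike]
  split_ifs with h
  · rcases lt_trichotomy v 0 with hneg | rfl | hpos
    · rw [abs_of_neg hneg] at hv h
      rw [Real.sign_of_neg hneg, abs_lt]
      constructor <;> linarith
    · simp only [abs_zero] at hv h
      linarith
    · rw [abs_of_pos hpos] at hv h
      rw [Real.sign_of_pos hpos, abs_lt]
      constructor <;> linarith
  · simpa using h

lemma abs_mul_add_lt_two_mul {β u a θ : ℝ} (hβ0 : 0 ≤ β) (hβ1 : β ≤ 1) (hu : |u| < θ)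
    (ha : |a| < θ) : |β * u + a| < 2 * θ :=
  calc |β * u + a| ≤ β * |u| + |a| := by
        simpa only [abs_mul, abs_of_nonneg hβ0] using abs_add_le (β * u) a
    _ ≤ |u| + |a| := by gcongr; exact mul_le_of_le_one_left (abs_nonneg u) hβ1
    _ < 2 * θ := by linarith

/-- With subthreshold input amplitudes, reset-to-mod and reset-by-subtraction
LIF produce identical outputs. -/
theorem reset_to_mod_eq_reset_by_subtraction_subthreshold
    (θ : ℝ) (hθ : 0 < θ) (β a u v b u' v' b' : ℕ → ℝ)
    (hβ : ∀ k, 0 < β k ∧ β k ≤ 1)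
    (ha : ∀ k, 1 ≤ k → |a k| < θ)
    -- reset-to-mod recursion
    (h0 : u 0 = 0)
    (hv : ∀ k, v (k + 1) = β k * u k + a (k + 1))
    (hb : ∀ k, b (k + 1) = θ * (q (v (k + 1) / θ) : ℝ))
    (hu : ∀ k, u (k + 1) = v (k + 1) - b (k + 1))
    -- reset-by-subtraction recursion
    (h0' : u' 0 = 0)
    (hv' : ∀ k, v' (k + 1) = β k * u' k + a (k + 1))
    (hb' : ∀ k, b' (k + 1) = if θ ≤ |v' (k + 1)| then θ * Real.sign (v' (k + 1)) else 0)
    (hu' : ∀ k, u' (k + 1) = v' (k + 1) - b' (k + 1)) :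
    ∀ k, 1 ≤ k → b k = b' k := by
  have hv_small : ∀ n, |u n| < θ → |v (n + 1)| < 2 * θ := fun n hun => by
    rw [hv]
    exact abs_mul_add_lt_two_mul (hβ n).1.le (hβ n).2 hun (ha (n + 1) n.succ_pos)
  have hb_spike : ∀ n, |u n| < θ → b (n + 1) = thresholdSpike θ (v (n + 1)) := fun n hun => by
    rw [hb, mul_q_div_eq_thresholdSpike hθ (hv_small n hun)]
  have hb_eq : ∀ n, u n = u' n → |u n| < θ → b (n + 1) = b' (n + 1) := fun n heq hun => by
    rw [hb_spike n hun, hb', hv, hv', heq, thresholdSpike]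
  have hu_eq : ∀ n, u n = u' n ∧ |u n| < θ := by
    intro n
    induction n with
    | zero => simp [h0, h0', hθ]
    | succ n ih =>
      refine ⟨by rw [hu, hu', hv, hv', ih.1, hb_eq n ih.1 ih.2], ?_⟩
      rw [hu, hb_spike n ih.2]
      exact abs_sub_thresholdSpike_lt (hv_small n ih.2)
  intro k hk
  obtain ⟨n, rfl⟩ : ∃ n, k = n + 1 := ⟨k - 1, by omega⟩
  exact hb_eq n (hu_eq n).1 (hu_eq n).2
end
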